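/- Let N ≥ 1, let μ be a Radon measure on ℝ^N, let g : ℝ^N → [0,∞] be Borel measurable, and let V₁, V₂ ⊆ ℝ^N be disjoint nonempty open sets. Suppose the weak stability inequality holds on V₁ ∪ V₂: for every C¹ function φ with compact support contained in V₁ ∪ V₂ and with ∫ φ dμ = 0, one has ∫ g φ² dμ ≤ ∫ |∇φ|² dμ. Then for at least one j ∈ {1,2}, the strong stability inequality holds on V_j: ∫ g φ² dμ ≤ ∫ |∇φ|² dμ for every C¹ function φ with compact support contained in V_j, without any zero-average restriction. -/

import Mathlib

open MeasureTheory Metric Set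
open scoped ENNReal

noncomputable section

abbrev En (N : ℕ) := EuclideanSpace ℝ (Fin N)

/-- The strong stability inequality on `W`: `∫ g φ² dμ ≤ ∫ |∇φ|² dμ` for every `C¹`
function `φ` with compact support contained in `W`. -/
def strongStab (N : ℕ) (μ : Measure (En N)) (g : En N → ℝ≥0∞) (W : Set (En N)) : Prop :=
  ∀ φ : En N → ℝ, ContDiff ℝ 1 φ → HasCompactSupport φ → tsupport φ ⊆ W →
    (∫⁻ x, g x * ENNReal.ofReal (φ x ^ 2) ∂μ)
      ≤ ∫⁻ x, ENNReal.ofReal (‖fderiv ℝ φ x‖ ^ 2) ∂μ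

/-- The weak stability inequality on `W`: as `strongStab`, but only for test functions
with `∫ φ dμ = 0`. -/
def weakStab (N : ℕ) (μ : Measure (En N)) (g : En N → ℝ≥0∞) (W : Set (En N)) : Prop :=
  ∀ φ : En N → ℝ, ContDiff ℝ 1 φ → HasCompactSupport φ → tsupport φ ⊆ W →
    (∫ x, φ x ∂μ) = 0 →
    (∫⁻ x, g x * ENNReal.ofReal (φ x ^ 2) ∂μ)
      ≤ ∫⁻ x, ENNReal.ofReal (‖fderiv ℝ φ x‖ ^ 2) ∂μ

/-!
If strong stability fails in both `V₁` and `V₂`, pick witnesses `φ₁`, `φ₂`. Their supports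
are disjoint, so for `φ = a φ₁ + b φ₂` both sides of the stability inequality split as
`a² (…φ₁…) + b² (…φ₂…)`. Choosing `(a, b) ≠ 0` with `a ∫ φ₁ + b ∫ φ₂ = 0` makes `φ` admissible
for the weak inequality, which then contradicts the strict failures for `φ₁` and `φ₂`.
-/

open Function

lemma ofReal_norm_smul_add_smul_sq {α F : Type*} [NormedAddCommGroup F] [NormedSpace ℝ F]
    {u v : α → F} (huv : Disjoint (support u) (support v)) (a b : ℝ) (x : α) :
    ENNReal.ofReal (‖a • u x + b • v x‖ ^ 2)
      = ENNReal.ofReal (a ^ 2) * ENNReal.ofReal (‖u x‖ ^ 2)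
        + ENNReal.ofReal (b ^ 2) * ENNReal.ofReal (‖v x‖ ^ 2) := by
  by_cases hu : u x = 0
  · simp [hu, norm_smul, mul_pow, ENNReal.ofReal_mul (sq_nonneg b)]
  · have hv : v x = 0 := notMem_support.mp (disjoint_left.mp huv (mem_support.mpr hu))
    simp [hv, norm_smul, mul_pow, ENNReal.ofReal_mul (sq_nonneg a)]

section WeightedSqIntegral

variable {E : Type*} [MeasurableSpace E]

def weightedSqIntegral (μ : Measure E) (g : E → ℝ≥0∞) (φ : E → ℝ) : ℝ≥0∞ :=
  ∫⁻ x, g x * ENNReal.ofReal (φ x ^ 2) ∂μ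

lemma add_le_weightedSqIntegral_linearCombination (μ : Measure E) (g : E → ℝ≥0∞)
    {φ₁ φ₂ : E → ℝ} (hφ : Disjoint (support φ₁) (support φ₂)) (a b : ℝ) :
    ENNReal.ofReal (a ^ 2) * weightedSqIntegral μ g φ₁
        + ENNReal.ofReal (b ^ 2) * weightedSqIntegral μ g φ₂
      ≤ weightedSqIntegral μ g (fun x => a * φ₁ x + b * φ₂ x) := by
  have hsplit (x : E) : g x * ENNReal.ofReal ((a * φ₁ x + b * φ₂ x) ^ 2)
      = ENNReal.ofReal (a ^ 2) * (g x * ENNReal.ofReal (φ₁ x ^ 2))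
        + ENNReal.ofReal (b ^ 2) * (g x * ENNReal.ofReal (φ₂ x ^ 2)) := by
    have := ofReal_norm_smul_add_smul_sq hφ a b x
    simp only [smul_eq_mul, Real.norm_eq_abs, sq_abs] at this
    rw [this]
    ring
  simp only [weightedSqIntegral, hsplit]
  rw [← lintegral_const_mul' _ _ ENNReal.ofReal_ne_top,
    ← lintegral_const_mul' _ _ ENNReal.ofReal_ne_top]
  exact le_lintegral_add _ _

end WeightedSqIntegral

section DirichletEnergy

variable {E : Type*} [NormedAddCommGroup E] [NormedSpace ℝ E] [MeasurableSpace E]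

def dirichletEnergy (μ : Measure E) (φ : E → ℝ) : ℝ≥0∞ :=
  ∫⁻ x, ENNReal.ofReal (‖fderiv ℝ φ x‖ ^ 2) ∂μ

lemma dirichletEnergy_linearCombination [OpensMeasurableSpace E] (μ : Measure E)
    {φ₁ φ₂ : E → ℝ} (hφ₁ : ContDiff ℝ 1 φ₁) (hφ₂ : ContDiff ℝ 1 φ₂)
    (hφ : Disjoint (tsupport φ₁) (tsupport φ₂)) (a b : ℝ) :
    dirichletEnergy μ (fun x => a * φ₁ x + b * φ₂ x)
      = ENNReal.ofReal (a ^ 2) * dirichletEnergy μ φ₁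
        + ENNReal.ofReal (b ^ 2) * dirichletEnergy μ φ₂ := by
  have hderiv (x : E) : fderiv ℝ (fun y => a * φ₁ y + b * φ₂ y) x
      = a • fderiv ℝ φ₁ x + b • fderiv ℝ φ₂ x := by
    have hd₁ := hφ₁.differentiable one_ne_zero x
    have hd₂ := hφ₂.differentiable one_ne_zero x
    rw [fderiv_fun_add (hd₁.const_mul a) (hd₂.const_mul b), fderiv_const_mul hd₁,
      fderiv_const_mul hd₂]
  have hsupp : Disjoint (support (fderiv ℝ φ₁)) (support (fderiv ℝ φ₂)) :=
    hφ.mono (support_fderiv_subset ℝ) (support_fderiv_subset ℝ)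
  have hmeas : Measurable fun x => ENNReal.ofReal (‖fderiv ℝ φ₁ x‖ ^ 2) :=
    ((hφ₁.continuous_fderiv one_ne_zero).norm.pow 2).measurable.ennreal_ofReal
  simp only [dirichletEnergy, hderiv, ofReal_norm_smul_add_smul_sq hsupp]
  rw [lintegral_add_left (hmeas.const_mul _), lintegral_const_mul' _ _ ENNReal.ofReal_ne_top,
    lintegral_const_mul' _ _ ENNReal.ofReal_ne_top]

end DirichletEnergy

lemma ENNReal.mul_add_mul_lt_mul_add_mul {p q J₁ J₂ I₁ I₂ : ℝ≥0∞} (hp : p ≠ ∞) (hq : q ≠ ∞)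
    (hpq : p ≠ 0 ∨ q ≠ 0) (h₁ : J₁ < I₁) (h₂ : J₂ < I₂) :
    p * J₁ + q * J₂ < p * I₁ + q * I₂ := by
  rcases hpq with hp0 | hq0
  · exact ENNReal.add_lt_add_of_lt_of_le (ENNReal.mul_ne_top hq h₂.ne_top)
      (ENNReal.mul_lt_mul_right hp0 hp h₁) (by gcongr)
  · exact ENNReal.add_lt_add_of_le_of_lt (ENNReal.mul_ne_top hp h₁.ne_top)
      (by gcongr) (ENNReal.mul_lt_mul_right hq0 hq h₂)

lemma exists_ne_zero_mul_add_mul_eq_zero (c₁ c₂ : ℝ) :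
    ∃ a b : ℝ, (a ≠ 0 ∨ b ≠ 0) ∧ a * c₁ + b * c₂ = 0 := by
  by_cases hc₂ : c₂ = 0
  · exact ⟨0, 1, Or.inr one_ne_zero, by simp [hc₂]⟩
  · exact ⟨c₂, -c₁, Or.inl hc₂, by ring⟩

lemma weakStab.weighted_le_of_mean_eq_zero {N : ℕ} {μ : Measure (En N)}
    [IsLocallyFiniteMeasure μ] {g : En N → ℝ≥0∞} {V₁ V₂ : Set (En N)}
    (hweak : weakStab N μ g (V₁ ∪ V₂)) (hd : Disjoint V₁ V₂) {φ₁ φ₂ : En N → ℝ}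
    (hφ₁ : ContDiff ℝ 1 φ₁) (hk₁ : HasCompactSupport φ₁) (hs₁ : tsupport φ₁ ⊆ V₁)
    (hφ₂ : ContDiff ℝ 1 φ₂) (hk₂ : HasCompactSupport φ₂) (hs₂ : tsupport φ₂ ⊆ V₂)
    {a b : ℝ} (hab : a * ∫ x, φ₁ x ∂μ + b * ∫ x, φ₂ x ∂μ = 0) :
    ENNReal.ofReal (a ^ 2) * weightedSqIntegral μ g φ₁
        + ENNReal.ofReal (b ^ 2) * weightedSqIntegral μ g φ₂
      ≤ ENNReal.ofReal (a ^ 2) * dirichletEnergy μ φ₁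
        + ENNReal.ofReal (b ^ 2) * dirichletEnergy μ φ₂ := by
  have hφ : Disjoint (tsupport φ₁) (tsupport φ₂) := hd.mono hs₁ hs₂
  have hmean : ∫ x, a * φ₁ x + b * φ₂ x ∂μ = 0 := by
    rw [integral_add ((hφ₁.continuous.integrable_of_hasCompactSupport hk₁).const_mul a)
      ((hφ₂.continuous.integrable_of_hasCompactSupport hk₂).const_mul b),
      integral_const_mul, integral_const_mul, hab]
  have hsupp : tsupport (fun x => a * φ₁ x + b * φ₂ x) ⊆ V₁ ∪ V₂ :=
    (tsupport_add _ _).trans (union_subset_union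
      ((tsupport_mul_subset_right (f := fun _ => a)).trans hs₁)
      ((tsupport_mul_subset_right (f := fun _ => b)).trans hs₂))
  calc _ ≤ weightedSqIntegral μ g (fun x => a * φ₁ x + b * φ₂ x) :=
        add_le_weightedSqIntegral_linearCombination μ g
          (hφ.mono (subset_tsupport _) (subset_tsupport _)) a b
    _ ≤ dirichletEnergy μ (fun x => a * φ₁ x + b * φ₂ x) :=
        hweak _ ((contDiff_const.mul hφ₁).add (contDiff_const.mul hφ₂))
          (hk₁.mul_left.add hk₂.mul_left) hsupp hmean
    _ = _ := dirichletEnergy_linearCombination μ hφ₁ hφ₂ hφ a b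

theorem weak_stability_dichotomy_general
    (N : ℕ) (μ : Measure (En N)) [IsLocallyFiniteMeasure μ]
    (g : En N → ℝ≥0∞)
    (V₁ V₂ : Set (En N))
    (hd : Disjoint V₁ V₂)
    (hweak : weakStab N μ g (V₁ ∪ V₂)) :
    strongStab N μ g V₁ ∨ strongStab N μ g V₂ := by
  by_contra! hfail
  simp only [strongStab, not_forall, not_le] at hfail
  obtain ⟨⟨φ₁, hφ₁, hk₁, hs₁, hlt₁⟩, ⟨φ₂, hφ₂, hk₂, hs₂, hlt₂⟩⟩ := hfail
  obtain ⟨a, b, hab_ne, hab⟩ :=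
    exists_ne_zero_mul_add_mul_eq_zero (∫ x, φ₁ x ∂μ) (∫ x, φ₂ x ∂μ)
  have hweights : ENNReal.ofReal (a ^ 2) ≠ 0 ∨ ENNReal.ofReal (b ^ 2) ≠ 0 := by
    simpa only [ne_eq, ENNReal.ofReal_eq_zero, not_le, sq_pos_iff] using hab_ne
  exact (ENNReal.mul_add_mul_lt_mul_add_mul ENNReal.ofReal_ne_top ENNReal.ofReal_ne_top
    hweights hlt₁ hlt₂).not_ge
    (hweak.weighted_le_of_mean_eq_zero hd hφ₁ hk₁ hs₁ hφ₂ hk₂ hs₂ hab)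

/-- **Weak stability implies strong stability in one of two disjoint open sets**
(Remark 2.6 of the paper). -/
theorem weak_stability_dichotomy
    (N : ℕ) (hN : 1 ≤ N) (μ : Measure (En N)) [IsLocallyFiniteMeasure μ]
    (g : En N → ℝ≥0∞) (hg : Measurable g)
    (V₁ V₂ : Set (En N)) (h1 : IsOpen V₁) (h2 : IsOpen V₂)
    (hd : Disjoint V₁ V₂) (hne1 : V₁.Nonempty) (hne2 : V₂.Nonempty)
    (hweak : weakStab N μ g (V₁ ∪ V₂)) :
    strongStab N μ g V₁ ∨ strongStab N μ g V₂ :=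
  weak_stability_dichotomy_general N μ g V₁ V₂ hd hweak
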